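/- arXiv:1811.10149 — 4 statements merged into one kernel-verified Lean document; each statement's English description precedes it below -/
import Mathlib

section
/- For all positive integers m and n, the number of subgroups of the abelian group Z/m × Z/n equals the sum over divisors a of m and b of n of gcd(a, b). -/
open AddSubgroup Finset

private lemma card_filter_dvd_range (c d : ℕ) (hd : 0 < d) (hdc : d ∣ c) :
    ((Finset.range c).filter (fun t => d ∣ t)).card = c / d := by
  have himg : (Finset.range c).filter (fun t => d ∣ t)
      = (Finset.range (c / d)).image (· * d) := by
    ext t
    simp only [mem_filter, mem_range, mem_image]
    constructor
    · rintro ⟨htc, s, rfl⟩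
      refine ⟨s, ?_, mul_comm s d⟩
      have h2 := Nat.div_lt_div_of_lt_of_dvd hdc htc
      rwa [Nat.mul_div_cancel_left s hd] at h2
    · rintro ⟨s, hs, rfl⟩
      refine ⟨?_, s, mul_comm s d⟩
      calc s * d < (c / d) * d := (Nat.mul_lt_mul_right hd).mpr hs
        _ = c := Nat.div_mul_cancel hdc
  rw [himg, Finset.card_image_of_injective _ (fun x y h => Nat.eq_of_mul_eq_mul_right hd h),
    Finset.card_range]

private lemma card_filter_mul (a c : ℕ) (ha : 0 < a) (hc : 0 < c) :
    ((Finset.range c).filter (fun t => c ∣ a * t)).card = Nat.gcd a c := by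
  set g := Nat.gcd a c with hg
  have hg0 : 0 < g := Nat.gcd_pos_of_pos_left _ ha
  have hgc : g ∣ c := Nat.gcd_dvd_right a c
  have hga : g ∣ a := Nat.gcd_dvd_left a c
  have key : ∀ t, c ∣ a * t ↔ (c / g) ∣ t := by
    intro t
    constructor
    · intro h
      have h1 : c / g ∣ (a / g) * t := by
        have h2 : g * (c / g) ∣ g * ((a / g) * t) := by
          rw [Nat.mul_div_cancel' hgc, ← mul_assoc, Nat.mul_div_cancel' hga]
          exact h
        exact (mul_dvd_mul_iff_left hg0.ne').mp h2
      exact Nat.Coprime.dvd_of_dvd_mul_left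
        ((Nat.coprime_div_gcd_div_gcd hg0).symm) h1
    · rintro ⟨s, rfl⟩
      obtain ⟨a', ha'⟩ := hga
      exact ⟨a' * s, by
        rw [ha', show g * a' * (c / g * s) = (g * (c / g)) * (a' * s) by ring,
          Nat.mul_div_cancel' hgc]⟩
  have hfe : (Finset.range c).filter (fun t => c ∣ a * t)
      = (Finset.range c).filter (fun t => (c / g) ∣ t) := by
    ext t; simp only [mem_filter, key]
  rw [hfe, card_filter_dvd_range c (c / g)
    (Nat.div_pos (Nat.le_of_dvd hc hgc) hg0) (Nat.div_dvd_of_dvd hgc),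
    Nat.div_div_self hgc hc.ne']

private lemma mem_zmultiples_natCast_iff {n : ℕ} [NeZero n] {c : ℕ} (hc : c ∣ n) (x : ℕ) :
    ((x : ZMod n) ∈ zmultiples ((c : ZMod n))) ↔ c ∣ x := by
  have hc0 : c ≠ 0 := by rintro rfl; exact (NeZero.ne n) (Nat.eq_zero_of_zero_dvd hc)
  haveI : NeZero c := ⟨hc0⟩
  constructor
  · intro hmem
    obtain ⟨k, hk⟩ := mem_zmultiples_iff.mp hmem
    have h1 := congrArg (ZMod.castHom hc (ZMod c)) hk
    rw [map_zsmul, map_natCast, map_natCast, ZMod.natCast_self, smul_zero] at h1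
    exact (ZMod.natCast_eq_zero_iff x c).mp h1.symm
  · rintro ⟨s, rfl⟩
    have hseq : ((s : ℤ)) • ((c : ZMod n)) = ((c * s : ℕ) : ZMod n) := by
      rw [zsmul_eq_mul]
      push_cast
      ring
    exact ⟨(s : ℤ), hseq⟩

private lemma addOrderOf_natCast_of_dvd {n c : ℕ} (hn : n ≠ 0) (hc : c ∣ n) :
    addOrderOf ((c : ZMod n)) = n / c := by
  rw [ZMod.addOrderOf_coe c hn, Nat.gcd_eq_right hc]

private lemma zmod_addSubgroup_eq {n : ℕ} [NeZero n] (H : AddSubgroup (ZMod n)) :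
    ∃ c, c ∣ n ∧ H = zmultiples ((c : ZMod n)) := by
  have hn : n ≠ 0 := NeZero.ne n
  set d := Nat.card H with hd
  have hdvd : d ∣ n := by
    have h0 := card_addSubgroup_dvd_card H
    rwa [Nat.card_zmod] at h0
  have hd0 : 0 < d := Nat.card_pos
  refine ⟨n / d, Nat.div_dvd_of_dvd hdvd, ?_⟩
  have hle : H ≤ zmultiples (((n / d : ℕ) : ZMod n)) := by
    intro x hx
    have h1 : d • x = 0 := by
      have h2 : d • (⟨x, hx⟩ : H) = 0 := card_nsmul_eq_zero'
      have h3 := congrArg (H.subtype) h2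
      rwa [map_nsmul, map_zero] at h3
    have hx' : ((x.val : ℕ) : ZMod n) = x := ZMod.natCast_rightInverse x
    have h2 : ((d * x.val : ℕ) : ZMod n) = 0 := by
      push_cast
      rw [hx', ← nsmul_eq_mul, h1]
    have h3 : n ∣ d * x.val := (ZMod.natCast_eq_zero_iff _ n).mp h2
    have h4 : (n / d) ∣ x.val := by
      refine (mul_dvd_mul_iff_left (a := d) hd0.ne').mp ?_
      rwa [Nat.mul_div_cancel' hdvd]
    obtain ⟨s, hs⟩ := h4
    have hxeq : ((s : ℤ)) • (((n / d : ℕ) : ZMod n)) = x := by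
      rw [zsmul_eq_mul, ← hx', hs]
      push_cast
      ring
    exact ⟨(s : ℤ), hxeq⟩
  have hcard : Nat.card (zmultiples (((n / d : ℕ) : ZMod n))) = d := by
    rw [Nat.card_zmultiples, addOrderOf_natCast_of_dvd hn (Nat.div_dvd_of_dvd hdvd),
      Nat.div_div_self hdvd hn]
  exact eq_of_le_of_card_ge hle (le_of_eq hcard)

private def Fsub (m n a c t : ℕ) : AddSubgroup (ZMod m × ZMod n) :=
  zmultiples (((m / a : ℕ) : ZMod m), ((t : ℕ) : ZMod n))
    ⊔ zmultiples ((0 : ZMod m), ((c : ℕ) : ZMod n))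

private lemma mem_Fsub {m n a c t : ℕ} {x : ZMod m} {y : ZMod n} :
    (x, y) ∈ Fsub m n a c t ↔
      ∃ j k : ℤ, x = j • ((m / a : ℕ) : ZMod m)
        ∧ y = j • ((t : ℕ) : ZMod n) + k • ((c : ℕ) : ZMod n) := by
  rw [Fsub, AddSubgroup.mem_sup]
  constructor
  · rintro ⟨u, hu, v, hv, huv⟩
    obtain ⟨j, rfl⟩ := mem_zmultiples_iff.mp hu
    obtain ⟨k, rfl⟩ := mem_zmultiples_iff.mp hv
    refine ⟨j, k, ?_, ?_⟩
    · have h1 := congrArg Prod.fst huv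
      simpa using h1.symm
    · have h2 := congrArg Prod.snd huv
      simpa using h2.symm
  · rintro ⟨j, k, hx, hy⟩
    refine ⟨j • (((m / a : ℕ) : ZMod m), ((t : ℕ) : ZMod n)), ⟨j, rfl⟩,
      k • ((0 : ZMod m), ((c : ℕ) : ZMod n)), ⟨k, rfl⟩, ?_⟩
    ext
    · simp [hx]
    · simp [hy]

private lemma Fsub_gen1_mem (m n a c t : ℕ) :
    ((((m / a : ℕ) : ZMod m)), ((t : ℕ) : ZMod n)) ∈ Fsub m n a c t :=
  mem_Fsub.mpr ⟨1, 0, by simp, by simp⟩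

private lemma Fsub_gen2_mem (m n a c t : ℕ) :
    ((0 : ZMod m), ((c : ℕ) : ZMod n)) ∈ Fsub m n a c t :=
  mem_Fsub.mpr ⟨0, 1, by simp, by simp⟩

private lemma Fsub_card_fst {m n a c t : ℕ} [NeZero m] [NeZero n] (ha : a ∣ m) :
    Nat.card ((Fsub m n a c t).map (AddMonoidHom.fst (ZMod m) (ZMod n))) = a := by
  have hmap : (Fsub m n a c t).map (AddMonoidHom.fst (ZMod m) (ZMod n))
      = zmultiples (((m / a : ℕ) : ZMod m)) := by
    rw [Fsub, AddSubgroup.map_sup, AddMonoidHom.map_zmultiples, AddMonoidHom.map_zmultiples]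
    simp [zmultiples_zero_eq_bot]
  rw [hmap, Nat.card_zmultiples,
    addOrderOf_natCast_of_dvd (NeZero.ne m) (Nat.div_dvd_of_dvd ha),
    Nat.div_div_self ha (NeZero.ne m)]

private lemma Fsub_comap_inr {m n a c t : ℕ} [NeZero m] [NeZero n]
    (ha : a ∣ m) (hc : c ∣ n) (hd : c ∣ a * t) :
    (Fsub m n a c t).comap (AddMonoidHom.inr (ZMod m) (ZMod n))
      = zmultiples ((c : ZMod n)) := by
  ext y
  rw [AddSubgroup.mem_comap]
  constructor
  · intro hy
    have hy' : ((0 : ZMod m), y) ∈ Fsub m n a c t := by simpa using hy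
    obtain ⟨j, k, h0, hyeq⟩ := mem_Fsub.mp hy'
    have hord : ((a : ℕ) : ℤ) ∣ j := by
      have : (addOrderOf (((m / a : ℕ) : ZMod m)) : ℤ) ∣ j :=
        addOrderOf_dvd_iff_zsmul_eq_zero.mpr h0.symm
      rwa [addOrderOf_natCast_of_dvd (NeZero.ne m) (Nat.div_dvd_of_dvd ha),
        Nat.div_div_self ha (NeZero.ne m)] at this
    obtain ⟨j', rfl⟩ := hord
    have h1 : ((a * t : ℕ) : ZMod n) ∈ zmultiples ((c : ZMod n)) :=
      (mem_zmultiples_natCast_iff hc _).mpr hd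
    have h2 : y = j' • ((a * t : ℕ) : ZMod n) + k • ((c : ℕ) : ZMod n) := by
      rw [hyeq, zsmul_eq_mul, zsmul_eq_mul, zsmul_eq_mul]
      push_cast
      ring
    rw [h2]
    exact add_mem (zsmul_mem h1 j') (zsmul_mem (mem_zmultiples _) k)
  · intro hy
    obtain ⟨k, hk⟩ := mem_zmultiples_iff.mp hy
    have : ((0 : ZMod m), y) ∈ Fsub m n a c t :=
      mem_Fsub.mpr ⟨0, k, by simp, by simp [← hk]⟩
    simpa using this

private lemma Fsub_injective {m n : ℕ} [NeZero m] [NeZero n] {a c t a' c' t' : ℕ}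
    (ha : a ∣ m) (hc : c ∣ n) (ht : t < c) (hd : c ∣ a * t)
    (ha' : a' ∣ m) (hc' : c' ∣ n) (ht' : t' < c') (hd' : c' ∣ a' * t')
    (hF : Fsub m n a c t = Fsub m n a' c' t') : a = a' ∧ c = c' ∧ t = t' := by
  have haa : a = a' := by
    have h1 := Fsub_card_fst (n := n) (c := c) (t := t) ha
    have h2 := Fsub_card_fst (n := n) (c := c') (t := t') ha'
    rw [hF] at h1
    exact h1.symm.trans h2
  subst haa
  have hcc : c = c' := by
    have h1 := Fsub_comap_inr ha hc hd
    have h2 := Fsub_comap_inr ha hc' hd'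
    rw [hF, h2] at h1
    have hdv1 : c ∣ c' := (mem_zmultiples_natCast_iff hc c').mp (h1 ▸ mem_zmultiples _)
    have hdv2 : c' ∣ c := (mem_zmultiples_natCast_iff hc' c).mp (h1.symm ▸ mem_zmultiples _)
    exact Nat.dvd_antisymm hdv1 hdv2
  subst hcc
  refine ⟨rfl, rfl, ?_⟩
  have h1 := Fsub_gen1_mem m n a c t
  have h2 := Fsub_gen1_mem m n a c t'
  rw [← hF] at h2
  have h3 : ((0 : ZMod m), ((t : ℕ) : ZMod n) - ((t' : ℕ) : ZMod n)) ∈ Fsub m n a c t := by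
    have := (Fsub m n a c t).sub_mem h1 h2
    simpa using this
  have h4 : ((t : ℕ) : ZMod n) - ((t' : ℕ) : ZMod n) ∈ zmultiples ((c : ZMod n)) := by
    have h5 : (((t : ℕ) : ZMod n) - ((t' : ℕ) : ZMod n)) ∈
        (Fsub m n a c t).comap (AddMonoidHom.inr (ZMod m) (ZMod n)) := by
      rw [AddSubgroup.mem_comap]
      simpa using h3
    rwa [Fsub_comap_inr ha hc hd] at h5
  rcases le_total t' t with hle | hle
  · have h6 : ((t - t' : ℕ) : ZMod n) ∈ zmultiples ((c : ZMod n)) := by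
      rwa [Nat.cast_sub hle]
    have h7 : c ∣ t - t' := (mem_zmultiples_natCast_iff hc _).mp h6
    have h8 : t - t' < c := lt_of_le_of_lt (Nat.sub_le _ _) ht
    have h9 : t - t' = 0 := Nat.eq_zero_of_dvd_of_lt h7 h8
    omega
  · have h6 : ((t' - t : ℕ) : ZMod n) ∈ zmultiples ((c : ZMod n)) := by
      rw [Nat.cast_sub hle, ← neg_sub]
      exact neg_mem h4
    have h7 : c ∣ t' - t := (mem_zmultiples_natCast_iff hc _).mp h6
    have h8 : t' - t < c := lt_of_le_of_lt (Nat.sub_le _ _) ht'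
    have h9 : t' - t = 0 := Nat.eq_zero_of_dvd_of_lt h7 h8
    omega

private lemma Fsub_surjective {m n : ℕ} (hm : 0 < m) (hn : 0 < n)
    (H : AddSubgroup (ZMod m × ZMod n)) :
    ∃ a c t, a ∣ m ∧ c ∣ n ∧ t < c ∧ c ∣ a * t ∧ H = Fsub m n a c t := by
  haveI : NeZero m := ⟨hm.ne'⟩
  haveI : NeZero n := ⟨hn.ne'⟩
  obtain ⟨a₀, ha₀, hP⟩ := zmod_addSubgroup_eq (H.map (AddMonoidHom.fst (ZMod m) (ZMod n)))
  obtain ⟨c, hc, hK⟩ := zmod_addSubgroup_eq (H.comap (AddMonoidHom.inr (ZMod m) (ZMod n)))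
  set a := m / a₀ with hadef
  have ha : a ∣ m := Nat.div_dvd_of_dvd ha₀
  have hma : m / a = a₀ := Nat.div_div_self ha₀ hm.ne'
  have hmem : ((a₀ : ℕ) : ZMod m) ∈ H.map (AddMonoidHom.fst (ZMod m) (ZMod n)) :=
    hP ▸ mem_zmultiples _
  obtain ⟨⟨x, y⟩, hxyH, hxy⟩ := AddSubgroup.mem_map.mp hmem
  have hx : x = ((a₀ : ℕ) : ZMod m) := hxy
  subst hx
  have hc0 : 0 < c := Nat.pos_of_dvd_of_pos hc hn
  set t := y.val % c with htdef
  have ht : t < c := Nat.mod_lt _ hc0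
  have h0c : ((0 : ZMod m), ((c : ℕ) : ZMod n)) ∈ H := by
    have h1 : ((c : ℕ) : ZMod n) ∈ H.comap (AddMonoidHom.inr (ZMod m) (ZMod n)) :=
      hK ▸ mem_zmultiples _
    simpa using AddSubgroup.mem_comap.mp h1
  have hat : (((a₀ : ℕ) : ZMod m), ((t : ℕ) : ZMod n)) ∈ H := by
    have hyt : y = ((t : ℕ) : ZMod n) + (y.val / c) • ((c : ℕ) : ZMod n) := by
      conv_lhs => rw [← ZMod.natCast_rightInverse y, ← Nat.mod_add_div y.val c]
      rw [nsmul_eq_mul]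
      push_cast
      ring
    have h2 : (((a₀ : ℕ) : ZMod m), ((t : ℕ) : ZMod n))
        = (((a₀ : ℕ) : ZMod m), y) - (y.val / c) • ((0 : ZMod m), ((c : ℕ) : ZMod n)) := by
      have hyt' : y - (y.val / c) • ((c : ℕ) : ZMod n) = ((t : ℕ) : ZMod n) := by
        nth_rewrite 1 [hyt]
        rw [add_sub_cancel_right]
      rw [Prod.smul_mk, Prod.mk_sub_mk, smul_zero, sub_zero, hyt']
    rw [h2]
    exact H.sub_mem hxyH (H.nsmul_mem h0c _)
  have hcdvd : c ∣ a * t := by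
    have h4 : ((0 : ZMod m), ((a * t : ℕ) : ZMod n))
        = a • ((((a₀ : ℕ) : ZMod m)), ((t : ℕ) : ZMod n)) := by
      ext
      · show (0 : ZMod m) = a • ((a₀ : ℕ) : ZMod m)
        rw [nsmul_eq_mul]
        have : ((a * a₀ : ℕ) : ZMod m) = 0 := by
          rw [Nat.div_mul_cancel ha₀, ZMod.natCast_self]
        push_cast at this ⊢
        rw [this]
      · show ((a * t : ℕ) : ZMod n) = a • ((t : ℕ) : ZMod n)
        rw [nsmul_eq_mul]
        push_cast
        ring
    have h3 : ((0 : ZMod m), ((a * t : ℕ) : ZMod n)) ∈ H := by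
      rw [h4]
      exact H.nsmul_mem hat _
    have h5 : ((a * t : ℕ) : ZMod n) ∈ H.comap (AddMonoidHom.inr (ZMod m) (ZMod n)) := by
      rw [AddSubgroup.mem_comap]
      simpa using h3
    rw [hK] at h5
    exact (mem_zmultiples_natCast_iff hc _).mp h5
  refine ⟨a, c, t, ha, hc, ht, hcdvd, ?_⟩
  apply le_antisymm
  · rintro ⟨x, y'⟩ hxy'
    have hx : x ∈ H.map (AddMonoidHom.fst (ZMod m) (ZMod n)) :=
      AddSubgroup.mem_map.mpr ⟨(x, y'), hxy', rfl⟩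
    rw [hP] at hx
    obtain ⟨j, hj⟩ := mem_zmultiples_iff.mp hx
    have h5 : ((0 : ZMod m), y' - j • ((t : ℕ) : ZMod n)) ∈ H := by
      have heq : ((0 : ZMod m), y' - j • ((t : ℕ) : ZMod n))
          = (x, y') - j • ((((a₀ : ℕ) : ZMod m)), ((t : ℕ) : ZMod n)) := by
        ext
        · simp [← hj]
        · simp
      rw [heq]
      exact H.sub_mem hxy' (H.zsmul_mem hat j)
    have h6 : y' - j • ((t : ℕ) : ZMod n) ∈ H.comap (AddMonoidHom.inr (ZMod m) (ZMod n)) := by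
      rw [AddSubgroup.mem_comap]
      simpa using h5
    rw [hK] at h6
    obtain ⟨k, hk⟩ := mem_zmultiples_iff.mp h6
    refine mem_Fsub.mpr ⟨j, k, ?_, ?_⟩
    · rw [hma, ← hj]
    · rw [hk]
      abel
  · rw [Fsub]
    apply sup_le
    · rw [zmultiples_le, hma]
      exact hat
    · rw [zmultiples_le]
      exact h0c

theorem subgroup_count_zmod_prod (m n : ℕ) (hm : 0 < m) (hn : 0 < n) :
    Nat.card (AddSubgroup (ZMod m × ZMod n)) =
      ∑ a ∈ m.divisors, ∑ b ∈ n.divisors, Nat.gcd a b := by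
  haveI : NeZero m := ⟨hm.ne'⟩
  haveI : NeZero n := ⟨hn.ne'⟩
  classical
  set S : Finset (ℕ × ℕ × ℕ) :=
    (m.divisors ×ˢ n.divisors ×ˢ Finset.range n).filter
      (fun p => p.2.2 < p.2.1 ∧ p.2.1 ∣ p.1 * p.2.2) with hS
  have hmemS : ∀ p : ℕ × ℕ × ℕ, p ∈ S ↔
      p.1 ∣ m ∧ p.2.1 ∣ n ∧ p.2.2 < p.2.1 ∧ p.2.1 ∣ p.1 * p.2.2 := by
    intro p
    simp only [hS, mem_filter, mem_product, mem_range, Nat.mem_divisors]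
    constructor
    · rintro ⟨⟨h1, h2, h3⟩, h4, h5⟩
      exact ⟨h1.1, h2.1, h4, h5⟩
    · rintro ⟨h1, h2, h3, h4⟩
      exact ⟨⟨⟨h1, hm.ne'⟩, ⟨h2, hn.ne'⟩, lt_of_lt_of_le h3 (Nat.le_of_dvd hn h2)⟩, h3, h4⟩
  have hbij : Function.Bijective
      (fun p : {p : ℕ × ℕ × ℕ // p ∈ S} => Fsub m n p.1.1 p.1.2.1 p.1.2.2) := by
    constructor
    · rintro ⟨⟨a, c, t⟩, hp⟩ ⟨⟨a', c', t'⟩, hp'⟩ hF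
      obtain ⟨h1, h2, h3, h4⟩ := (hmemS _).mp hp
      obtain ⟨h1', h2', h3', h4'⟩ := (hmemS _).mp hp'
      obtain ⟨e1, e2, e3⟩ := Fsub_injective h1 h2 h3 h4 h1' h2' h3' h4' hF
      subst e1; subst e2; subst e3
      rfl
    · intro H
      obtain ⟨a, c, t, ha, hc, ht, hd, hH⟩ := Fsub_surjective hm hn H
      exact ⟨⟨(a, c, t), (hmemS _).mpr ⟨ha, hc, ht, hd⟩⟩, hH.symm⟩
  rw [← Nat.card_eq_of_bijective _ hbij, Nat.card_eq_finsetCard S]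
  have hcard : S.card = ∑ a ∈ m.divisors, ∑ c ∈ n.divisors,
      ((Finset.range n).filter (fun t => t < c ∧ c ∣ a * t)).card := by
    rw [hS, Finset.card_filter, Finset.sum_product]
    refine Finset.sum_congr rfl fun a _ => ?_
    rw [Finset.sum_product]
    refine Finset.sum_congr rfl fun c _ => ?_
    rw [Finset.card_filter]
  rw [hcard]
  refine Finset.sum_congr rfl fun a hamem => ?_
  refine Finset.sum_congr rfl fun c hcmem => ?_
  have hcn : c ∣ n := (Nat.mem_divisors.mp hcmem).1
  have hfe : (Finset.range n).filter (fun t => t < c ∧ c ∣ a * t)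
      = (Finset.range c).filter (fun t => c ∣ a * t) := by
    ext t
    simp only [mem_filter, mem_range]
    constructor
    · rintro ⟨_, h2, h3⟩
      exact ⟨h2, h3⟩
    · rintro ⟨h2, h3⟩
      exact ⟨lt_of_lt_of_le h2 (Nat.le_of_dvd hn hcn), h2, h3⟩
  rw [hfe, card_filter_mul a c (Nat.pos_of_mem_divisors hamem) (Nat.pos_of_mem_divisors hcmem)]
end

section
/- For all positive integers m and n, the sum over divisors a of m and b of n of gcd(a,b) equals the sum over common divisors u of gcd(m,n) of φ(u)·τ(m/u)·τ(n/u), where φ is Euler's totient function and τ is the number-of-divisors function. -/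
/-!
Write `gcd a b = ∑_{u ∣ gcd a b} φ u` (Gauss) and let `u` run over the divisors of `gcd m n`,
which contain every such `u`. Exchanging the order of summation, `u` is counted once for each
pair `(a, b)` of divisors of `m` and `n` that are both multiples of `u`; the multiples of `u`
among the divisors of `m` correspond to the divisors of `m / u` via `a ↦ a / u`.
-/

open Finset
open scoped Nat

namespace Nat

theorem card_divisors_filter_dvd {m u : ℕ} (hu : u ∣ m) :
    #{a ∈ m.divisors | u ∣ a} = #(m / u).divisors := by
  obtain ⟨k, rfl⟩ := hu
  rcases u.eq_zero_or_pos with rfl | hu0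
  · simp
  rw [Nat.mul_div_cancel_left k hu0]
  symm
  refine card_nbij' (u * ·) (· / u) ?_ ?_ (fun c _ => Nat.mul_div_cancel_left c hu0) ?_
  · intro c hc
    simp only [coe_filter, mem_divisors, Set.mem_ofPred_eq, mem_coe] at hc ⊢
    exact ⟨⟨Nat.mul_dvd_mul_left u hc.1, mul_ne_zero hu0.ne' hc.2⟩, dvd_mul_right u c⟩
  · intro a ha
    simp only [coe_filter, mem_divisors, Set.mem_ofPred_eq, mem_coe] at ha ⊢
    obtain ⟨⟨hak, hk⟩, c, rfl⟩ := ha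
    rw [Nat.mul_div_cancel_left c hu0]
    exact ⟨Nat.dvd_of_mul_dvd_mul_left hu0 hak, right_ne_zero_of_mul hk⟩
  · intro a ha
    simp only [coe_filter, Set.mem_ofPred_eq] at ha
    exact Nat.mul_div_cancel' ha.2

theorem sum_totient_divisors_filter_dvd {d g : ℕ} (hd : d ≠ 0) (hg : g ∣ d) :
    ∑ u ∈ d.divisors with u ∣ g, φ u = g := by
  rw [divisors_filter_dvd_of_dvd hd hg, sum_totient]

end Nat

theorem gcd_divisor_sum_eq_general (m n : ℕ) :
    ∑ a ∈ m.divisors, ∑ b ∈ n.divisors, Nat.gcd a b =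
      ∑ u ∈ (Nat.gcd m n).divisors,
        Nat.totient u * (m / u).divisors.card * (n / u).divisors.card := by
  calc ∑ a ∈ m.divisors, ∑ b ∈ n.divisors, Nat.gcd a b
      = ∑ p ∈ m.divisors ×ˢ n.divisors,
          ∑ u ∈ (m.gcd n).divisors with u ∣ p.1 ∧ u ∣ p.2, φ u := by
        rw [sum_product]
        refine sum_congr rfl fun a ha => sum_congr rfl fun b hb => ?_
        rw [Nat.mem_divisors] at ha hb
        simp_rw [← Nat.dvd_gcd_iff]
        exact (Nat.sum_totient_divisors_filter_dvd (Nat.gcd_ne_zero_left ha.2)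
          (gcd_dvd_gcd ha.1 hb.1)).symm
    _ = ∑ u ∈ (m.gcd n).divisors,
          ∑ _p ∈ {a ∈ m.divisors | u ∣ a} ×ˢ {b ∈ n.divisors | u ∣ b}, φ u := by
        refine sum_comm' fun p u => ?_
        simp only [mem_product, mem_filter, Nat.mem_divisors, Nat.dvd_gcd_iff]
        tauto
    _ = _ := by
        refine sum_congr rfl fun u hu => ?_
        have hum := (Nat.dvd_of_mem_divisors hu).trans (Nat.gcd_dvd_left m n)
        have hun := (Nat.dvd_of_mem_divisors hu).trans (Nat.gcd_dvd_right m n)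
        rw [sum_const, card_product, Nat.card_divisors_filter_dvd hum,
          Nat.card_divisors_filter_dvd hun, smul_eq_mul]
        ring

theorem gcd_divisor_sum_eq (m n : ℕ) (hm : 0 < m) (hn : 0 < n) :
    ∑ a ∈ m.divisors, ∑ b ∈ n.divisors, Nat.gcd a b =
      ∑ u ∈ (Nat.gcd m n).divisors,
        Nat.totient u * (m / u).divisors.card * (n / u).divisors.card :=
  gcd_divisor_sum_eq_general m n
end

section
/- For all positive integers m and n, the number of cyclic subgroups of Z/m × Z/n equals the sum over divisors a of m and b of n of φ(gcd(a,b)), where φ is Euler's totient function. -/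
/-!
A cyclic subgroup `H` has exactly `φ |H|` generators, so a finite group has
`∑ x, 1 / φ (ord x)` cyclic subgroups. In `ℤ/m × ℤ/n` the order of `(u, v)` is
`lcm (ord u) (ord v)`, and `ℤ/m` has `φ a` elements of order `a` for each `a ∣ m`; the sum
becomes `∑ a ∣ m, ∑ b ∣ n, φ a φ b / φ (lcm a b)`, and
`φ a φ b = φ (gcd a b) φ (lcm a b)`.
-/

open AddSubgroup Finset
open scoped Nat

theorem Nat.totient_gcd_mul_totient_lcm (a b : ℕ) :
    φ (a.gcd b) * φ (a.lcm b) = φ a * φ b := by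
  rcases Nat.eq_zero_or_pos (a.gcd b) with hg | hg
  · obtain ⟨rfl, rfl⟩ := Nat.gcd_eq_zero_iff.mp hg
    simp
  · have h := Nat.totient_gcd_mul_totient_mul (a.gcd b) (a.lcm b)
    rw [Nat.gcd_eq_left ((Nat.gcd_dvd_left a b).trans (Nat.dvd_lcm_left a b)), Nat.gcd_mul_lcm,
      Nat.totient_gcd_mul_totient_mul] at h
    exact (Nat.eq_of_mul_eq_mul_right hg h).symm

theorem zmultiples_eq_zmultiples_iff_addOrderOf_eq {G : Type*} [AddGroup G] {x y : G}
    (hx : IsOfFinAddOrder x) (hy : y ∈ zmultiples x) :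
    zmultiples y = zmultiples x ↔ addOrderOf y = addOrderOf x := by
  refine ⟨fun h => by rw [← Nat.card_zmultiples, h, Nat.card_zmultiples], fun h => ?_⟩
  have : Finite (zmultiples x) := (finite_zmultiples.mpr hx).to_subtype
  exact eq_of_le_of_card_ge (zmultiples_le.mpr hy)
    (by rw [Nat.card_zmultiples, Nat.card_zmultiples, h])

theorem IsOfFinAddOrder.card_generators_zmultiples {G : Type*} [AddGroup G] {x : G}
    (hx : IsOfFinAddOrder x) :
    Nat.card {y : G // zmultiples y = zmultiples x} = φ (addOrderOf x) := by
  have : Fintype (zmultiples x) := (finite_zmultiples.mpr hx).fintype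
  have e : {y : zmultiples x // addOrderOf y = addOrderOf x} ≃
      {y : G // zmultiples y = zmultiples x} :=
    (Equiv.subtypeEquivRight fun y => by
      rw [← addOrderOf_coe, zmultiples_eq_zmultiples_iff_addOrderOf_eq hx y.2]).trans
      (Equiv.subtypeSubtypeEquivSubtype fun h => h ▸ mem_zmultiples _)
  rw [← Nat.card_congr e, Nat.card_eq_fintype_card, Fintype.card_subtype,
    IsAddCyclic.card_addOrderOf_eq_totient
      (by rw [← Nat.card_eq_fintype_card, Nat.card_zmultiples])]

theorem card_cyclic_addSubgroups_eq_sum_inv_totient (G : Type*) [AddGroup G] [Fintype G] :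
    (Nat.card {H : AddSubgroup G // ∃ x, H = zmultiples x} : ℚ) =
      ∑ x : G, (φ (addOrderOf x) : ℚ)⁻¹ := by
  classical
  have hS : Nat.card {H : AddSubgroup G // ∃ x, H = zmultiples x} =
      #(univ.image (zmultiples : G → AddSubgroup G)) := by
    rw [← Nat.card_eq_finsetCard]
    congr
    ext
    simp [eq_comm]
  rw [hS, card_eq_sum_ones, Nat.cast_sum, Nat.cast_one]
  refine sum_image' _ fun x _ => ?_
  have hx := isOfFinAddOrder_of_finite x
  have hgen : #{y | zmultiples y = zmultiples x} = φ (addOrderOf x) := by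
    rw [← Fintype.card_subtype, ← Nat.card_eq_fintype_card, hx.card_generators_zmultiples]
  have hord : ∀ y ∈ ({y | zmultiples y = zmultiples x} : Finset G),
      addOrderOf y = addOrderOf x := fun y hy => by
    rw [← Nat.card_zmultiples, (mem_filter.mp hy).2, Nat.card_zmultiples]
  rw [sum_congr rfl fun y hy => by rw [hord y hy], sum_const, hgen, nsmul_eq_mul,
    mul_inv_cancel₀]
  exact_mod_cast (Nat.totient_pos.mpr (addOrderOf_pos x)).ne'

theorem IsAddCyclic.sum_comp_addOrderOf {α M : Type*} [AddGroup α] [Fintype α] [IsAddCyclic α]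
    [AddCommMonoid M] (f : ℕ → M) :
    ∑ u : α, f (addOrderOf u) = ∑ d ∈ (Fintype.card α).divisors, φ d • f d := by
  classical
  rw [← sum_fiberwise_of_maps_to' (t := (Fintype.card α).divisors) (fun u _ =>
    Nat.mem_divisors.mpr ⟨addOrderOf_dvd_card, Fintype.card_ne_zero⟩)]
  refine sum_congr rfl fun d hd => ?_
  rw [sum_const, IsAddCyclic.card_addOrderOf_eq_totient (Nat.dvd_of_mem_divisors hd)]

theorem IsAddCyclic.sum_prod_comp_addOrderOf {α β M : Type*}
    [AddGroup α] [Fintype α] [IsAddCyclic α] [AddGroup β] [Fintype β] [IsAddCyclic β]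
    [AddCommMonoid M] (f : ℕ → ℕ → M) :
    ∑ x : α × β, f (addOrderOf x.1) (addOrderOf x.2) =
      ∑ a ∈ (Fintype.card α).divisors, ∑ b ∈ (Fintype.card β).divisors,
        φ a • φ b • f a b := by
  simp_rw [Fintype.sum_prod_type, IsAddCyclic.sum_comp_addOrderOf (α := β)]
  rw [sum_comm, sum_congr rfl fun b _ => IsAddCyclic.sum_comp_addOrderOf (fun a => φ b • f a b), sum_comm]

theorem cyclic_subgroup_count_zmod_prod (m n : ℕ) (hm : 0 < m) (hn : 0 < n) :
    Nat.card {H : AddSubgroup (ZMod m × ZMod n) // ∃ x, H = AddSubgroup.zmultiples x} =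
      ∑ a ∈ m.divisors, ∑ b ∈ n.divisors, Nat.totient (Nat.gcd a b) := by
  have : NeZero m := ⟨hm.ne'⟩
  have : NeZero n := ⟨hn.ne'⟩
  have hcount := card_cyclic_addSubgroups_eq_sum_inv_totient (ZMod m × ZMod n)
  simp_rw [Prod.addOrderOf] at hcount
  rw [IsAddCyclic.sum_prod_comp_addOrderOf (fun a b => (φ (a.lcm b) : ℚ)⁻¹), ZMod.card,
    ZMod.card] at hcount
  rw [← Nat.cast_inj (R := ℚ), hcount]
  push_cast
  refine sum_congr rfl fun a ha => sum_congr rfl fun b hb => ?_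
  have hlcm : (φ (a.lcm b) : ℚ) ≠ 0 := by
    exact_mod_cast (Nat.totient_pos.mpr (Nat.lcm_pos (Nat.pos_of_mem_divisors ha)
      (Nat.pos_of_mem_divisors hb))).ne'
  rw [nsmul_eq_mul, nsmul_eq_mul, eq_comm, ← mul_assoc, eq_mul_inv_iff_mul_eq₀ hlcm]
  exact_mod_cast Nat.totient_gcd_mul_totient_lcm a b
end

section
/- Let q ≥ 2 be an integer and p an integer, and let H(q) = {a ∈ Z/q : for every prime ℓ | q, v_ℓ((p+1−a)²−4p) = v_ℓ(q) − 1}. Then |H(q)| ≤ √(q·rad(q)), where rad(q) is the radical (product of distinct prime divisors) of q. -/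
/-!
Reduction modulo the prime powers `ℓ ^ r ∥ q` injects `H(q)` into `∏ H(ℓ ^ r)` (Chinese remainder
theorem), so it suffices to show `|H(ℓ ^ r)|² ≤ ℓ ^ (r + 1)`. Write `x = b - a` and
`D = x² - c` (here `b = p + 1`, `c = 4p`). If `ℓ ^ (r - 1) ∣ c`, then `ℓ ^ (r - 1) ∣ x²`, so `x`
lies in a single class modulo `ℓ ^ ⌈(r - 1) / 2⌉`. Otherwise `v(x²) = v(c)`, so every `x` has the
same valuation `s`, with `2s ≤ r - 2`. Sort the `a ∈ H(ℓ ^ r)` by the nonzero residue of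
`D / ℓ ^ (r - 1)` modulo `ℓ`: two `a` in the same class have `ℓ ^ r ∣ x² - x'²`, and since
`v(2x') = s + v(2)` this forces `x ≡ ±x'` modulo `ℓ ^ (r - s - v(2))`. For odd `ℓ` this gives
`|H| ≤ 2(ℓ - 1)ℓ ^ s`, enough as `4(ℓ - 1)² ≤ ℓ³`. For `ℓ = 2` it gives `|H| ≤ 2 ^ (s + 2)`, and
as all `x` agree modulo `2 ^ (s + 1)` also `|H| ≤ 2 ^ (r - s - 1)`; multiply the two bounds.
-/

open Finset Function

theorem card_filter_dvd_sub_le (d n : ℕ) (z : ℤ) :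
    #{x ∈ range (d * n) | (d : ℤ) ∣ ↑x - z} ≤ n := by
  calc #{x ∈ range (d * n) | (d : ℤ) ∣ ↑x - z} ≤ #(range n) := by
        refine card_le_card_of_injOn (· / d) (fun x hx => ?_)
          (fun x hx y hy (hxy : x / d = y / d) => ?_)
        · simp only [coe_filter, Set.mem_ofPred_eq, mem_range] at hx
          exact mem_range.mpr (Nat.div_lt_of_lt_mul hx.1)
        · simp only [coe_filter, Set.mem_ofPred_eq] at hx hy
          have hmod : x % d = y % d := Nat.modEq_iff_dvd.mpr (by simpa using dvd_sub hy.2 hx.2)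
          rw [← Nat.div_add_mod x d, ← Nat.div_add_mod y d, hxy, hmod]
    _ = n := card_range n

theorem card_filter_pow_dvd_sub_le (ℓ : ℕ) {k r : ℕ} (hk : k ≤ r) (z : ℤ) :
    #{x ∈ range (ℓ ^ r) | (ℓ : ℤ) ^ k ∣ ↑x - z} ≤ ℓ ^ (r - k) := by
  have := card_filter_dvd_sub_le (ℓ ^ k) (ℓ ^ (r - k)) z
  rwa [← pow_add, Nat.add_sub_cancel' hk, Nat.cast_pow] at this

section padicValInt

variable {ℓ : ℕ} [Fact ℓ.Prime]

theorem pow_dvd_of_pow_dvd_sq {x : ℤ} {m : ℕ} (h : (ℓ : ℤ) ^ m ∣ x ^ 2) :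
    (ℓ : ℤ) ^ ((m + 1) / 2) ∣ x := by
  rcases eq_or_ne x 0 with rfl | hx
  · exact dvd_zero _
  have hm := ((padicValInt_dvd_iff m _).mp h).resolve_left (pow_ne_zero 2 hx)
  rw [sq, padicValInt.mul hx hx] at hm
  exact (padicValInt_dvd_iff _ _).mpr (Or.inr (by omega))

theorem padicValInt_eq_of_pow_dvd_sub {u c : ℤ} {m : ℕ} (hc : ¬ (ℓ : ℤ) ^ m ∣ c)
    (h : (ℓ : ℤ) ^ m ∣ u - c) : padicValInt ℓ u = padicValInt ℓ c := by
  obtain ⟨hc0, hvc⟩ : c ≠ 0 ∧ padicValInt ℓ c < m := by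
    simpa only [padicValInt_dvd_iff, not_or, not_le] using hc
  have hiff : ∀ k ≤ m, (ℓ : ℤ) ^ k ∣ u ↔ (ℓ : ℤ) ^ k ∣ c := fun k hk =>
    dvd_iff_dvd_of_dvd_sub ((pow_dvd_pow _ hk).trans h)
  have hlow := (hiff _ hvc.le).mpr (padicValInt_dvd c)
  have hup := (hiff (padicValInt ℓ c + 1) hvc).not.mpr (by simp [padicValInt_dvd_iff, hc0])
  simp only [padicValInt_dvd_iff, not_or, not_le] at hlow hup
  omega

theorem pow_dvd_sub_or_pow_dvd_add_of_pow_dvd_sq_sub_sq {x y : ℤ} {r w : ℕ}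
    (h : (ℓ : ℤ) ^ r ∣ x ^ 2 - y ^ 2) (hy : ¬ (ℓ : ℤ) ^ (w + 1) ∣ 2 * y) :
    (ℓ : ℤ) ^ (r - w) ∣ x - y ∨ (ℓ : ℤ) ^ (r - w) ∣ x + y := by
  by_contra! hne
  obtain ⟨hsub, hadd⟩ := hne
  simp only [padicValInt_dvd_iff, not_or, not_le] at hsub hadd
  -- the valuations of `x - y` and `x + y` add up to at least `r`, so both exceed `w`
  have hprod : r ≤ padicValInt ℓ (x - y) + padicValInt ℓ (x + y) := by
    rw [← padicValInt.mul hsub.1 hadd.1]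
    refine ((padicValInt_dvd_iff r _).mp ?_).resolve_left (mul_ne_zero hsub.1 hadd.1)
    rwa [sq_sub_sq, mul_comm] at h
  apply hy
  rw [show 2 * y = (x + y) - (x - y) by ring]
  exact dvd_sub ((padicValInt_dvd_iff _ _).mpr (Or.inr (by omega)))
    ((padicValInt_dvd_iff _ _).mpr (Or.inr (by omega)))

end padicValInt

theorem dvd_mul_sub_of_ediv_emod_eq {d e z z' : ℤ} (hz : d ∣ z) (hz' : d ∣ z')
    (h : z / d % e = z' / d % e) : d * e ∣ z - z' := by
  rcases eq_or_ne d 0 with rfl | hd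
  · simp [zero_dvd_iff.mp hz, zero_dvd_iff.mp hz']
  obtain ⟨u, rfl⟩ := hz
  obtain ⟨u', rfl⟩ := hz'
  rw [Int.mul_ediv_cancel_left _ hd, Int.mul_ediv_cancel_left _ hd] at h
  rw [← mul_sub]
  exact mul_dvd_mul_left d (Int.ModEq.dvd h.symm)

theorem ediv_emod_ne_zero_of_not_dvd_mul {d e z : ℤ} (hz : d ∣ z) (h : ¬ d * e ∣ z) :
    z / d % e ≠ 0 := by
  rcases eq_or_ne d 0 with rfl | hd
  · simp [zero_dvd_iff.mp hz] at h
  obtain ⟨u, rfl⟩ := hz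
  rw [Int.mul_ediv_cancel_left _ hd]
  exact fun hu => h (mul_dvd_mul_left d (Int.dvd_of_emod_eq_zero hu))

theorem two_pow_succ_dvd_sub {s : ℕ} {x y : ℤ} (hx : 2 ^ s ∣ x) (hx' : ¬ 2 ^ (s + 1) ∣ x)
    (hy : 2 ^ s ∣ y) (hy' : ¬ 2 ^ (s + 1) ∣ y) : 2 ^ (s + 1) ∣ x - y := by
  obtain ⟨u, rfl⟩ := hx
  obtain ⟨v, rfl⟩ := hy
  rw [pow_succ, mul_dvd_mul_iff_left (by positivity)] at hx' hy'
  rw [← mul_sub, pow_succ, mul_dvd_mul_iff_left (by positivity)]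
  omega

/-- `H(ℓ ^ r)`, with `D_a = (b - a)² - c`. -/
def localH (ℓ r : ℕ) (b c : ℤ) : Finset ℕ :=
  {a ∈ range (ℓ ^ r) | (ℓ : ℤ) ^ (r - 1) ∣ (b - a) ^ 2 - c ∧ ¬ (ℓ : ℤ) ^ r ∣ (b - a) ^ 2 - c}

section localH

variable {ℓ r : ℕ} {b c : ℤ}

theorem card_localH_le_of_dvd (hℓ : ℓ.Prime) (hc : (ℓ : ℤ) ^ (r - 1) ∣ c) :
    #(localH ℓ r b c) ≤ ℓ ^ (r - r / 2) := by
  have := Fact.mk hℓ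
  refine (card_le_card fun a ha => ?_).trans (card_filter_pow_dvd_sub_le ℓ (Nat.div_le_self r 2) b)
  obtain ⟨ha, hD, -⟩ := mem_filter.mp ha
  have hsq : (ℓ : ℤ) ^ (r - 1) ∣ (b - a) ^ 2 := by simpa using dvd_add hD hc
  have hroot := pow_dvd_of_pow_dvd_sq hsq
  rw [show (r - 1 + 1) / 2 = r / 2 by omega, ← dvd_neg, neg_sub] at hroot
  exact mem_filter.mpr ⟨ha, hroot⟩

theorem two_mul_padicValInt_of_mem_localH [Fact ℓ.Prime] {a : ℕ} (hc : ¬ (ℓ : ℤ) ^ (r - 1) ∣ c)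
    (ha : a ∈ localH ℓ r b c) : b - a ≠ 0 ∧ 2 * padicValInt ℓ (b - a) = padicValInt ℓ c := by
  obtain ⟨-, hD, -⟩ := mem_filter.mp ha
  have hx : b - a ≠ 0 := fun h0 => hc (by simpa [h0] using hD)
  refine ⟨hx, ?_⟩
  rw [two_mul, ← padicValInt.mul hx hx, ← sq]
  exact padicValInt_eq_of_pow_dvd_sub hc hD

theorem card_localH_le_of_not_pow_dvd_two_mul (hℓ : ℓ.Prime) (hr : 1 ≤ r) {w : ℕ} (hw : w ≤ r)
    (h2 : ∀ a ∈ localH ℓ r b c, ¬ (ℓ : ℤ) ^ (w + 1) ∣ 2 * (b - a)) :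
    #(localH ℓ r b c) ≤ 2 * ℓ ^ w * (ℓ - 1) := by
  have := Fact.mk hℓ
  have hℓ0 : (ℓ : ℤ) ≠ 0 := by exact_mod_cast hℓ.ne_zero
  have hpow : (ℓ : ℤ) ^ (r - 1) * ℓ = (ℓ : ℤ) ^ r := by rw [← pow_succ, Nat.sub_add_cancel hr]
  set φ : ℕ → ℤ := fun a => ((b - a) ^ 2 - c) / (ℓ : ℤ) ^ (r - 1) % ℓ
  have hmaps : ∀ a ∈ localH ℓ r b c, φ a ∈ Ioo 0 (ℓ : ℤ) := by
    intro a ha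
    obtain ⟨-, hD, hD'⟩ := mem_filter.mp ha
    rw [← hpow] at hD'
    exact mem_Ioo.mpr ⟨(Int.emod_nonneg _ hℓ0).lt_of_ne
      (ediv_emod_ne_zero_of_not_dvd_mul hD hD').symm, Int.emod_lt_of_pos _ (by omega)⟩
  have hfibre : ∀ j ∈ Ioo 0 (ℓ : ℤ), #{a ∈ localH ℓ r b c | φ a = j} ≤ 2 * ℓ ^ w := by
    intro j _
    rcases ({a ∈ localH ℓ r b c | φ a = j}).eq_empty_or_nonempty with he | ⟨a₀, ha₀⟩
    · simp [he]
    obtain ⟨ha₀H, ha₀j⟩ := mem_filter.mp ha₀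
    calc #{a ∈ localH ℓ r b c | φ a = j}
        ≤ #({x ∈ range (ℓ ^ r) | (ℓ : ℤ) ^ (r - w) ∣ ↑x - a₀} ∪
            {x ∈ range (ℓ ^ r) | (ℓ : ℤ) ^ (r - w) ∣ ↑x - (2 * b - a₀)}) := by
          refine card_le_card fun a ha => ?_
          obtain ⟨haH, haj⟩ := mem_filter.mp ha
          obtain ⟨har, hD, -⟩ := mem_filter.mp haH
          obtain ⟨-, hD₀, -⟩ := mem_filter.mp ha₀H
          have hsq : (ℓ : ℤ) ^ r ∣ (b - a) ^ 2 - (b - a₀) ^ 2 := by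
            rw [← hpow]
            simpa using dvd_mul_sub_of_ediv_emod_eq hD hD₀ (haj.trans ha₀j.symm)
          rw [mem_union, mem_filter, mem_filter]
          rcases pow_dvd_sub_or_pow_dvd_add_of_pow_dvd_sq_sub_sq hsq (h2 a₀ ha₀H) with h | h
          · exact Or.inl ⟨har, dvd_sub_comm.mp (by rwa [sub_sub_sub_cancel_left] at h)⟩
          · refine Or.inr ⟨har, ?_⟩
            rw [show (a : ℤ) - (2 * b - a₀) = -(b - a + (b - a₀)) by ring]
            exact dvd_neg.mpr h
      _ ≤ ℓ ^ w + ℓ ^ w := by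
          refine (card_union_le _ _).trans (add_le_add ?_ ?_) <;>
            simpa [Nat.sub_sub_self hw] using card_filter_pow_dvd_sub_le ℓ (Nat.sub_le r w) _
      _ = 2 * ℓ ^ w := (two_mul _).symm
  calc #(localH ℓ r b c) ≤ 2 * ℓ ^ w * #(Ioo 0 (ℓ : ℤ)) :=
        card_le_mul_card_image_of_maps_to hmaps _ hfibre
    _ = 2 * ℓ ^ w * (ℓ - 1) := by simp [Int.card_Ioo]

theorem card_localH_sq_le (hℓ : ℓ.Prime) (hr : 1 ≤ r) : #(localH ℓ r b c) ^ 2 ≤ ℓ ^ (r + 1) := by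
  have := Fact.mk hℓ
  by_cases hc : (ℓ : ℤ) ^ (r - 1) ∣ c
  · calc #(localH ℓ r b c) ^ 2 ≤ (ℓ ^ (r - r / 2)) ^ 2 :=
          Nat.pow_le_pow_left (card_localH_le_of_dvd hℓ hc) 2
      _ ≤ ℓ ^ (r + 1) := by rw [← pow_mul]; exact Nat.pow_le_pow_right hℓ.pos (by omega)
  rcases (localH ℓ r b c).eq_empty_or_nonempty with he | ⟨a₀, ha₀⟩
  · simp [he]
  set s := padicValInt ℓ (b - a₀)
  have hval : ∀ a ∈ localH ℓ r b c, (ℓ : ℤ) ^ s ∣ b - a ∧ ¬ (ℓ : ℤ) ^ (s + 1) ∣ b - a := by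
    intro a ha
    obtain ⟨hx, hv⟩ := two_mul_padicValInt_of_mem_localH hc ha
    obtain ⟨-, hv₀⟩ := two_mul_padicValInt_of_mem_localH hc ha₀
    simp only [padicValInt_dvd_iff, hx, false_or, not_le]
    omega
  have hsr : 2 * s + 2 ≤ r := by
    obtain ⟨-, hv₀⟩ := two_mul_padicValInt_of_mem_localH hc ha₀
    simp only [padicValInt_dvd_iff, not_or, not_le] at hc
    omega
  rcases hℓ.eq_two_or_odd' with rfl | hodd
  · have h₁ : #(localH 2 r b c) ≤ 2 * 2 ^ (s + 1) * (2 - 1) :=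
      card_localH_le_of_not_pow_dvd_two_mul hℓ hr (by omega) fun a ha h => (hval a ha).2 (by
        rwa [pow_succ' _ (s + 1), Nat.cast_ofNat, mul_dvd_mul_iff_left two_ne_zero] at h)
    have h₂ : #(localH 2 r b c) ≤ 2 ^ (r - (s + 1)) := by
      refine (card_le_card fun a ha => mem_filter.mpr ⟨(mem_filter.mp ha).1, ?_⟩).trans
        (card_filter_pow_dvd_sub_le 2 (by omega) (a₀ : ℤ))
      simpa using two_pow_succ_dvd_sub (hval a₀ ha₀).1 (hval a₀ ha₀).2 (hval a ha).1 (hval a ha).2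
    calc #(localH 2 r b c) ^ 2 = #(localH 2 r b c) * #(localH 2 r b c) := sq _
      _ ≤ 2 ^ (s + 2) * 2 ^ (r - (s + 1)) := Nat.mul_le_mul (h₁.trans_eq (by ring)) h₂
      _ = 2 ^ (r + 1) := by rw [← pow_add]; congr 1; omega
  · have hcop : IsCoprime ((ℓ : ℤ) ^ (s + 1)) 2 := by
      simpa using Nat.isCoprime_iff_coprime.mpr (Nat.coprime_two_right.mpr (hodd.pow (n := s + 1)))
    have h : #(localH ℓ r b c) ≤ 2 * ℓ ^ s * (ℓ - 1) :=
      card_localH_le_of_not_pow_dvd_two_mul hℓ hr (by omega) fun a ha h =>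
        (hval a ha).2 (hcop.dvd_of_dvd_mul_left h)
    have hℓ3 : (2 * (ℓ - 1)) ^ 2 ≤ ℓ ^ 3 := by
      obtain ⟨m, rfl⟩ : ∃ m, ℓ = m + 1 := ⟨ℓ - 1, by have := hℓ.pos; omega⟩
      simp only [Nat.add_sub_cancel]
      nlinarith [Nat.zero_le (m ^ 3)]
    calc #(localH ℓ r b c) ^ 2 ≤ (2 * ℓ ^ s * (ℓ - 1)) ^ 2 := Nat.pow_le_pow_left h 2
      _ = (2 * (ℓ - 1)) ^ 2 * ℓ ^ (2 * s) := by ring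
      _ ≤ ℓ ^ 3 * ℓ ^ (r - 2) := Nat.mul_le_mul hℓ3 (Nat.pow_le_pow_right hℓ.pos (by omega))
      _ = ℓ ^ (r + 1) := by rw [← pow_add]; congr 1; omega

end localH

theorem Nat.modEq_of_forall_primeFactors {q a a' : ℕ} (hq : q ≠ 0)
    (h : ∀ ℓ ∈ q.primeFactors, a ≡ a' [MOD ℓ ^ q.factorization ℓ]) : a ≡ a' [MOD q] := by
  rw [Nat.modEq_iff_dvd]
  have hcop : (q.primeFactors : Set ℕ).Pairwise
      (IsCoprime on fun ℓ => ((ℓ ^ q.factorization ℓ : ℕ) : ℤ)) := fun ℓ hℓ ℓ' hℓ' hne =>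
    Nat.isCoprime_iff_coprime.mpr (Nat.Coprime.pow _ _ ((Nat.coprime_primes
      (Nat.prime_of_mem_primeFactors hℓ) (Nat.prime_of_mem_primeFactors hℓ')).mpr hne))
  have := Finset.prod_dvd_of_coprime hcop fun ℓ hℓ => Nat.modEq_iff_dvd.mp (h ℓ hℓ)
  rwa [← Nat.cast_prod, ← Nat.prod_primeFactors_pow_factorization hq] at this

theorem card_filter_forall_primeFactors_le_prod {q : ℕ} (hq : q ≠ 0) (P : ℕ → ℕ → Prop)
    [∀ ℓ, DecidablePred (P ℓ)]
    (hP : ∀ ℓ ∈ q.primeFactors, ∀ a, P ℓ a → P ℓ (a % ℓ ^ q.factorization ℓ)) :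
    #{a ∈ range q | ∀ ℓ ∈ q.primeFactors, P ℓ a} ≤
      ∏ ℓ ∈ q.primeFactors, #{a ∈ range (ℓ ^ q.factorization ℓ) | P ℓ a} := by
  rw [← card_pi]
  refine card_le_card_of_injOn (fun a ℓ _ => a % ℓ ^ q.factorization ℓ) (fun a ha => ?_)
    (fun a ha a' ha' h => ?_)
  · simp only [coe_filter, Set.mem_ofPred_eq] at ha
    refine mem_pi.mpr fun ℓ hℓ => mem_filter.mpr
      ⟨mem_range.mpr (Nat.mod_lt _ ?_), hP ℓ hℓ a (ha.2 ℓ hℓ)⟩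
    exact pow_pos (Nat.prime_of_mem_primeFactors hℓ).pos _
  · simp only [coe_filter, Set.mem_ofPred_eq, mem_range] at ha ha'
    exact (Nat.modEq_of_forall_primeFactors hq fun ℓ hℓ =>
      congrFun (congrFun h ℓ) hℓ).eq_of_lt_of_lt ha.1 ha'.1

theorem dvd_sq_sub_mod_iff {d : ℤ} {m : ℕ} (hd : d ∣ m) (b c : ℤ) (a : ℕ) :
    d ∣ (b - (a % m : ℕ)) ^ 2 - c ↔ d ∣ (b - a) ^ 2 - c := by
  have hmod : (b - (a % m : ℕ)) ^ 2 - c ≡ (b - a) ^ 2 - c [ZMOD m] := by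
    rw [Int.natCast_mod]
    exact (((Int.mod_modEq a m).sub_left b).pow 2).sub_right c
  exact dvd_iff_dvd_of_dvd_sub (hd.trans hmod.symm.dvd)

/-- `H(q)`, with `D_a = (b - a)² - c`. -/
def H (q : ℕ) (b c : ℤ) : Finset ℕ :=
  {a ∈ range q | ∀ ℓ ∈ q.primeFactors, (ℓ : ℤ) ^ (q.factorization ℓ - 1) ∣ (b - a) ^ 2 - c ∧
    ¬ (ℓ : ℤ) ^ q.factorization ℓ ∣ (b - a) ^ 2 - c}

theorem card_H_le_prod_card_localH {q : ℕ} (hq : q ≠ 0) (b c : ℤ) :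
    #(H q b c) ≤ ∏ ℓ ∈ q.primeFactors, #(localH ℓ (q.factorization ℓ) b c) := by
  refine card_filter_forall_primeFactors_le_prod hq _ fun ℓ _ a => ?_
  rw [dvd_sq_sub_mod_iff (by rw [Nat.cast_pow]; exact pow_dvd_pow _ (Nat.sub_le _ _)),
    dvd_sq_sub_mod_iff (by rw [Nat.cast_pow])]
  exact id

theorem card_H_sq_le {q : ℕ} (hq : q ≠ 0) (b c : ℤ) :
    #(H q b c) ^ 2 ≤ q * ∏ ℓ ∈ q.primeFactors, ℓ :=
  calc #(H q b c) ^ 2 ≤ ∏ ℓ ∈ q.primeFactors, #(localH ℓ (q.factorization ℓ) b c) ^ 2 := by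
        rw [prod_pow]; exact Nat.pow_le_pow_left (card_H_le_prod_card_localH hq b c) 2
    _ ≤ ∏ ℓ ∈ q.primeFactors, ℓ ^ (q.factorization ℓ + 1) := by
        refine prod_le_prod' fun ℓ hℓ => card_localH_sq_le (Nat.prime_of_mem_primeFactors hℓ) ?_
        exact (Nat.prime_of_mem_primeFactors hℓ).factorization_pos_of_dvd hq
          (Nat.dvd_of_mem_primeFactors hℓ)
    _ = q * ∏ ℓ ∈ q.primeFactors, ℓ := by
        simp only [pow_succ, prod_mul_distrib, ← Nat.prod_primeFactors_pow_factorization hq]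

theorem card_H_le_sqrt_q_rad (q : ℕ) (hq : 2 ≤ q) (p : ℤ) :
    (Set.ncard {a : ℕ | a < q ∧ ∀ ℓ : ℕ, ℓ.Prime → ℓ ∣ q →
        ((ℓ : ℤ) ^ (q.factorization ℓ - 1) ∣ ((p + 1 - (a : ℤ)) ^ 2 - 4 * p) ∧
          ¬ (ℓ : ℤ) ^ (q.factorization ℓ) ∣ ((p + 1 - (a : ℤ)) ^ 2 - 4 * p))} : ℝ) ≤
      Real.sqrt ((q : ℝ) * ∏ ℓ ∈ q.primeFactors, (ℓ : ℝ)) := by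
  have hq0 : q ≠ 0 := by omega
  calc (Set.ncard _ : ℝ) = #(H q (p + 1) (4 * p)) := by
        rw [← Set.ncard_coe_finset]
        congr 2
        ext a
        simp [H, Nat.mem_primeFactors, hq0]
    _ ≤ _ := Real.le_sqrt_of_sq_le
        (by simpa using (Nat.cast_le (α := ℝ)).mpr (card_H_sq_le hq0 (p + 1) (4 * p)))
end
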